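/- Let ‖·‖* be a Barabanov norm for the irreducible matrix set 𝒜, and let ‖·‖_n, ‖·‖°_n be the norms produced by the max-relaxation iteration. Then ecc(‖·‖°_n, ‖·‖*) = ecc(‖·‖_n, ‖·‖*) for every n, and the sequence of numbers ecc(‖·‖_n, ‖·‖*) is nonincreasing in n. -/

import Mathlib

open Matrix Filter Topology Bornology Pointwise

/-- `N` is a norm on `ℝ^m`: nonnegative, definite, absolutely homogeneous, subadditive. -/
def IsNorm {m : ℕ} (N : (Fin m → ℝ) → ℝ) : Prop :=
  (∀ x, 0 ≤ N x) ∧ (∀ x, N x = 0 → x = 0) ∧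
    (∀ (t : ℝ) (x), N (t • x) = |t| * N x) ∧ (∀ x y, N (x + y) ≤ N x + N y)

/-- `N` is a seminorm on `ℝ^m`. -/
def IsSeminorm {m : ℕ} (N : (Fin m → ℝ) → ℝ) : Prop :=
  (∀ x, 0 ≤ N x) ∧
    (∀ (t : ℝ) (x), N (t • x) = |t| * N x) ∧ (∀ x y, N (x + y) ≤ N x + N y)

/-- The family `A` is irreducible: the matrices have no common invariant subspace
other than `⊥` and `⊤`. -/
def IsIrreducibleFamily {m r : ℕ} (A : Fin r → Matrix (Fin m) (Fin m) ℝ) : Prop :=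
  ∀ W : Submodule ℝ (Fin m → ℝ), (∀ i, ∀ x ∈ W, (A i).mulVec x ∈ W) → W = ⊥ ∨ W = ⊤

/-- The operator norm of a matrix acting on `ℝ^m` (with its sup norm). -/
noncomputable def matNorm {m : ℕ} (M : Matrix (Fin m) (Fin m) ℝ) : ℝ :=
  ‖LinearMap.toContinuousLinearMap M.mulVecLin‖

/-- The joint spectral radius of the family `A`:
`limsup_n (max over words of length n of the norm of the product)^(1/n)`. -/
noncomputable def jsr {m r : ℕ} (A : Fin r → Matrix (Fin m) (Fin m) ℝ) : ℝ :=
  Filter.atTop.limsup fun n : ℕ =>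
    (⨆ w : Fin n → Fin r, matNorm (List.ofFn fun k => A (w k)).prod) ^ (1 / (n : ℝ))

/-- `maxA A N x = max_i N (A_i x)`. -/
noncomputable def maxA {m r : ℕ} (A : Fin r → Matrix (Fin m) (Fin m) ℝ)
    (N : (Fin m → ℝ) → ℝ) (x : Fin m → ℝ) : ℝ :=
  ⨆ i, N ((A i).mulVec x)

/-- `ρ⁺ = max_{x ≠ 0} (max_i N (A_i x)) / N x`. -/
noncomputable def rhoSup {m r : ℕ} (A : Fin r → Matrix (Fin m) (Fin m) ℝ)
    (N : (Fin m → ℝ) → ℝ) : ℝ :=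
  sSup ((fun x => maxA A N x / N x) '' {x | x ≠ 0})

/-- `ρ⁻ = min_{x ≠ 0} (max_i N (A_i x)) / N x`. -/
noncomputable def rhoInf {m r : ℕ} (A : Fin r → Matrix (Fin m) (Fin m) ℝ)
    (N : (Fin m → ℝ) → ℝ) : ℝ :=
  sInf ((fun x => maxA A N x / N x) '' {x | x ≠ 0})

/-- An averaging function: continuous on positives, `γ t t = t`, and strictly
between `min` and `max` off the diagonal. -/
def IsAveraging (γ : ℝ → ℝ → ℝ) : Prop :=
  ContinuousOn (fun p : ℝ × ℝ => γ p.1 p.2) {p | 0 < p.1 ∧ 0 < p.2} ∧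
    (∀ t, 0 < t → γ t t = t) ∧
    ∀ t s, 0 < t → 0 < s → t ≠ s → min t s < γ t s ∧ γ t s < max t s

/-- The max-relaxation iteration: `‖x‖_{n+1} = max (‖x‖_n, γ_n⁻¹ max_i ‖A_i x‖_n)`
where `γ_n = γ (ρ⁻_n, ρ⁺_n)`. -/
noncomputable def iterN {m r : ℕ} (A : Fin r → Matrix (Fin m) (Fin m) ℝ)
    (γ : ℝ → ℝ → ℝ) (N0 : (Fin m → ℝ) → ℝ) : ℕ → (Fin m → ℝ) → ℝ
  | 0 => N0
  | n + 1 => fun x =>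
      max (iterN A γ N0 n x)
        ((γ (rhoInf A (iterN A γ N0 n)) (rhoSup A (iterN A γ N0 n)))⁻¹ *
          maxA A (iterN A γ N0 n) x)

/-- The normalized norms `‖x‖°_n = ‖x‖_n / ‖e‖_n` of the max-relaxation iteration
(for `n = 0` this equals `‖x‖_0` since `‖e‖_0 = 1`). -/
noncomputable def iterNnorm {m r : ℕ} (A : Fin r → Matrix (Fin m) (Fin m) ℝ)
    (γ : ℝ → ℝ → ℝ) (N0 : (Fin m → ℝ) → ℝ) (e : Fin m → ℝ) (n : ℕ) :
    (Fin m → ℝ) → ℝ :=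
  fun x => iterN A γ N0 n x / iterN A γ N0 n e

/-- `e⁺(N, N') = max_{x ≠ 0} N x / N' x`. -/
noncomputable def ePlus {m : ℕ} (N N' : (Fin m → ℝ) → ℝ) : ℝ :=
  sSup ((fun x => N x / N' x) '' {x | x ≠ 0})

/-- `e⁻(N, N') = min_{x ≠ 0} N x / N' x`. -/
noncomputable def eMinus {m : ℕ} (N N' : (Fin m → ℝ) → ℝ) : ℝ :=
  sInf ((fun x => N x / N' x) '' {x | x ≠ 0})

/-- The eccentricity of the norm `N` with respect to the norm `N'`. -/
noncomputable def ecc {m : ℕ} (N N' : (Fin m → ℝ) → ℝ) : ℝ :=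
  ePlus N N' / eMinus N N'

/-! If `a‖·‖* ≤ N ≤ b‖·‖*`, the Barabanov identity `max_i ‖A_i x‖* = ρ‖x‖*` gives
`aρ‖·‖* ≤ max_i N(A_i ·) ≤ bρ‖·‖*`. Hence for `g ≥ 0` the relaxed norm `max(N, g max_i N(A_i ·))`
lies between `aM‖·‖*` and `bM‖·‖*` with `M = max(1, gρ)`: applied with `a = e⁻`, `b = e⁺`, the
common factor `M` cancels in the eccentricity. Normalizing by `‖e‖_n` scales `e⁺` and `e⁻` by the
same positive factor. -/

section NormEquivalence

variable {m : ℕ} {N N' : (Fin m → ℝ) → ℝ}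

theorem IsNorm.map_zero (hN : IsNorm N) : N 0 = 0 := by
  simpa using hN.2.2.1 0 0

theorem IsNorm.pos (hN : IsNorm N) {x : Fin m → ℝ} (hx : x ≠ 0) : 0 < N x :=
  (hN.1 x).lt_of_ne fun h => hx (hN.2.1 x h.symm)

theorem IsNorm.exists_le_mul_norm (hN : IsNorm N) : ∃ C, 0 < C ∧ ∀ x, N x ≤ C * ‖x‖ := by
  have hsum : 0 ≤ ∑ i, N (Pi.single i 1) := Finset.sum_nonneg fun i _ => hN.1 _
  refine ⟨∑ i, N (Pi.single i 1) + 1, by linarith, fun x => ?_⟩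
  calc N x = N (∑ i, x i • Pi.single i 1) := by rw [← pi_eq_sum_univ' x]
    _ ≤ ∑ i, N (x i • Pi.single i 1) :=
      Finset.le_sum_of_subadditive N hN.map_zero.le hN.2.2.2 _ _
    _ ≤ ∑ i, ‖x‖ * N (Pi.single i 1) := by
      refine Finset.sum_le_sum fun i _ => ?_
      rw [hN.2.2.1]
      exact mul_le_mul_of_nonneg_right (norm_le_pi_norm x i) (hN.1 _)
    _ ≤ (∑ i, N (Pi.single i 1) + 1) * ‖x‖ := by
      rw [← Finset.mul_sum, mul_comm]
      gcongr
      linarith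

theorem IsNorm.continuous (hN : IsNorm N) : Continuous N := by
  obtain ⟨C, -, hC⟩ := hN.exists_le_mul_norm
  refine (LipschitzWith.of_le_add_mul' C fun x y => ?_).continuous
  calc N x = N (x - y + y) := by rw [sub_add_cancel]
    _ ≤ N (x - y) + N y := hN.2.2.2 _ _
    _ ≤ N y + C * dist x y := by rw [dist_eq_norm]; linarith [hC (x - y)]

theorem IsNorm.exists_mul_norm_le (hN : IsNorm N) : ∃ c, 0 < c ∧ ∀ x, c * ‖x‖ ≤ N x := by
  cases subsingleton_or_nontrivial (Fin m → ℝ) with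
  | inl _ => exact ⟨1, one_pos, fun x => by simp [Subsingleton.elim x 0, hN.map_zero]⟩
  | inr _ =>
    obtain ⟨u, hu, hmin⟩ := (isCompact_sphere (0 : Fin m → ℝ) 1).exists_isMinOn
      (NormedSpace.sphere_nonempty.mpr zero_le_one) hN.continuous.continuousOn
    refine ⟨N u, hN.pos (ne_zero_of_mem_unit_sphere ⟨u, hu⟩), fun x => ?_⟩
    rcases eq_or_ne x 0 with rfl | hx
    · simp [hN.map_zero]
    have hx' : 0 < ‖x‖ := norm_pos_iff.mpr hx
    have hunit : ‖x‖⁻¹ • x ∈ Metric.sphere (0 : Fin m → ℝ) 1 := by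
      simp [norm_smul, hx'.ne']
    calc N u * ‖x‖ ≤ N (‖x‖⁻¹ • x) * ‖x‖ := by gcongr; exact hmin hunit
      _ = N x := by rw [hN.2.2.1, abs_of_pos (inv_pos.mpr hx')]; field_simp

def IsComparable (N N' : (Fin m → ℝ) → ℝ) : Prop :=
  ∃ a b : ℝ, 0 < a ∧ 0 < b ∧ ∀ x, a * N' x ≤ N x ∧ N x ≤ b * N' x

theorem IsNorm.isComparable (hN : IsNorm N) (hN' : IsNorm N') : IsComparable N N' := by
  obtain ⟨C, hC, hNC⟩ := hN.exists_le_mul_norm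
  obtain ⟨c, hc, hcN⟩ := hN.exists_mul_norm_le
  obtain ⟨C', hC', hN'C'⟩ := hN'.exists_le_mul_norm
  obtain ⟨c', hc', hcN'⟩ := hN'.exists_mul_norm_le
  refine ⟨c / C', C / c', by positivity, by positivity, fun x => ⟨?_, ?_⟩⟩
  · calc c / C' * N' x ≤ c / C' * (C' * ‖x‖) := by gcongr; exact hN'C' x
      _ = c * ‖x‖ := by field_simp
      _ ≤ N x := hcN x
  · calc N x ≤ C * ‖x‖ := hNC x
      _ = C / c' * (c' * ‖x‖) := by field_simp
      _ ≤ C / c' * N' x := by gcongr; exact hcN' x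

theorem IsComparable.nonneg (h : IsComparable N N') (hN' : IsNorm N') (x : Fin m → ℝ) :
    0 ≤ N x := by
  obtain ⟨a, _, ha, _, hab⟩ := h
  exact le_trans (by have := hN'.1 x; positivity) (hab x).1

theorem IsComparable.pos (h : IsComparable N N') (hN' : IsNorm N') {x : Fin m → ℝ}
    (hx : x ≠ 0) : 0 < N x := by
  obtain ⟨a, _, ha, _, hab⟩ := h
  exact lt_of_lt_of_le (mul_pos ha (hN'.pos hx)) (hab x).1

end NormEquivalence

section Eccentricity

variable {m : ℕ} {N N' : (Fin m → ℝ) → ℝ} {a b : ℝ}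

theorem mem_lowerBounds_ratios (hN' : IsNorm N') (ha : ∀ x, a * N' x ≤ N x) :
    a ∈ lowerBounds ((fun x => N x / N' x) '' {x | x ≠ 0}) := by
  rintro _ ⟨x, hx, rfl⟩
  exact (le_div_iff₀ (hN'.pos hx)).2 (ha x)

theorem mem_upperBounds_ratios (hN' : IsNorm N') (hb : ∀ x, N x ≤ b * N' x) :
    b ∈ upperBounds ((fun x => N x / N' x) '' {x | x ≠ 0}) := by
  rintro _ ⟨x, hx, rfl⟩
  exact (div_le_iff₀ (hN'.pos hx)).2 (hb x)

theorem eMinus_mul_le (hN' : IsNorm N') (ha : ∀ x, a * N' x ≤ N x) (x : Fin m → ℝ) :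
    eMinus N N' * N' x ≤ N x := by
  rcases eq_or_ne x 0 with rfl | hx
  · simpa [hN'.map_zero] using ha 0
  exact (le_div_iff₀ (hN'.pos hx)).1 <|
    csInf_le ⟨a, mem_lowerBounds_ratios hN' ha⟩ ⟨x, hx, rfl⟩

theorem le_ePlus_mul (hN' : IsNorm N') (hb : ∀ x, N x ≤ b * N' x) (x : Fin m → ℝ) :
    N x ≤ ePlus N N' * N' x := by
  rcases eq_or_ne x 0 with rfl | hx
  · simpa [hN'.map_zero] using hb 0
  exact (div_le_iff₀ (hN'.pos hx)).1 <|
    le_csSup ⟨b, mem_upperBounds_ratios hN' hb⟩ ⟨x, hx, rfl⟩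

theorem ePlus_nonneg (hN : ∀ x, 0 ≤ N x) (hN' : ∀ x, 0 ≤ N' x) : 0 ≤ ePlus N N' :=
  Real.sSup_nonneg <| by
    rintro _ ⟨x, -, rfl⟩
    exact div_nonneg (hN x) (hN' x)

variable [Nontrivial (Fin m → ℝ)]

theorem ratios_nonempty : ((fun x => N x / N' x) '' {x : Fin m → ℝ | x ≠ 0}).Nonempty :=
  Set.Nonempty.image _ (exists_ne 0)

theorem le_eMinus (hN' : IsNorm N') (ha : ∀ x, a * N' x ≤ N x) : a ≤ eMinus N N' :=
  le_csInf ratios_nonempty (mem_lowerBounds_ratios hN' ha)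

theorem ePlus_le (hN' : IsNorm N') (hb : ∀ x, N x ≤ b * N' x) : ePlus N N' ≤ b :=
  csSup_le ratios_nonempty (mem_upperBounds_ratios hN' hb)

theorem ecc_le_div (hN' : IsNorm N') (ha : 0 < a) (hb : 0 ≤ b)
    (hab : ∀ x, a * N' x ≤ N x ∧ N x ≤ b * N' x) : ecc N N' ≤ b / a :=
  div_le_div₀ hb (ePlus_le hN' fun x => (hab x).2) ha (le_eMinus hN' fun x => (hab x).1)

theorem IsComparable.eMinus_pos (h : IsComparable N N') (hN' : IsNorm N') :
    0 < eMinus N N' := by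
  obtain ⟨a, _, ha, _, hab⟩ := h
  exact ha.trans_le (le_eMinus hN' fun x => (hab x).1)

end Eccentricity

theorem ecc_div_const {m : ℕ} {N N' : (Fin m → ℝ) → ℝ} {c : ℝ} (hc : 0 < c) :
    ecc (fun x => N x / c) N' = ecc N N' := by
  have himage : (fun x => N x / c / N' x) '' {x | x ≠ 0} =
      c⁻¹ • ((fun x => N x / N' x) '' {x | x ≠ 0}) := by
    rw [← Set.image_smul, Set.image_image]
    refine Set.image_congr fun x _ => ?_
    rw [smul_eq_mul]
    ring
  have hc' : 0 ≤ c⁻¹ := by positivity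
  simp only [ecc, ePlus, eMinus, himage, Real.sSup_smul_of_nonneg hc',
    Real.sInf_smul_of_nonneg hc', smul_eq_mul]
  exact mul_div_mul_left _ _ (inv_ne_zero hc.ne')

section Relaxation

variable {m r : ℕ} (A : Fin r → Matrix (Fin m) (Fin m) ℝ) {N N' : (Fin m → ℝ) → ℝ}
  {a b g ρ : ℝ}

theorem maxA_nonneg (hN : ∀ x, 0 ≤ N x) (x : Fin m → ℝ) : 0 ≤ maxA A N x :=
  Real.iSup_nonneg fun _ => hN _

theorem maxA_mono (h : ∀ x, N x ≤ N' x) (x : Fin m → ℝ) : maxA A N x ≤ maxA A N' x :=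
  ciSup_mono (Set.finite_range _).bddAbove fun _ => h _

theorem maxA_const_mul (ha : 0 ≤ a) (x : Fin m → ℝ) :
    maxA A (fun y => a * N y) x = a * maxA A N x :=
  (Real.mul_iSup_of_nonneg ha _).symm

noncomputable def relax (g : ℝ) (N : (Fin m → ℝ) → ℝ) : (Fin m → ℝ) → ℝ :=
  fun x => max (N x) (g * maxA A N x)

theorem relax_of_nonpos (hg : g ≤ 0) (hN : ∀ x, 0 ≤ N x) : relax A g N = N :=
  funext fun x => max_eq_left <|
    (mul_nonpos_of_nonpos_of_nonneg hg (maxA_nonneg A hN x)).trans (hN x)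

variable (hbar : ∀ x, ρ * N' x = maxA A N' x)
include hbar

theorem mul_le_relax (hN' : ∀ x, 0 ≤ N' x) (hg : 0 ≤ g) (ha : 0 ≤ a)
    (h : ∀ x, a * N' x ≤ N x) (x : Fin m → ℝ) :
    a * max 1 (g * ρ) * N' x ≤ relax A g N x := by
  calc a * max 1 (g * ρ) * N' x = max (a * N' x) (g * maxA A (fun y => a * N' y) x) := by
        rw [maxA_const_mul A ha, ← hbar, mul_max_of_nonneg _ _ ha,
          max_mul_of_nonneg _ _ (hN' x)]
        ring_nf
    _ ≤ relax A g N x := max_le_max (h x) (by gcongr; exact maxA_mono A h x)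

theorem relax_le_mul (hN' : ∀ x, 0 ≤ N' x) (hg : 0 ≤ g) (hb : 0 ≤ b)
    (h : ∀ x, N x ≤ b * N' x) (x : Fin m → ℝ) :
    relax A g N x ≤ b * max 1 (g * ρ) * N' x := by
  calc relax A g N x ≤ max (b * N' x) (g * maxA A (fun y => b * N' y) x) :=
        max_le_max (h x) (by gcongr; exact maxA_mono A h x)
    _ = b * max 1 (g * ρ) * N' x := by
        rw [maxA_const_mul A hb, ← hbar, mul_max_of_nonneg _ _ hb,
          max_mul_of_nonneg _ _ (hN' x)]
        ring_nf

theorem isComparable_relax (h : IsComparable N N') (hN' : IsNorm N') (g : ℝ) :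
    IsComparable (relax A g N) N' := by
  rcases le_total g 0 with hg | hg
  · rwa [relax_of_nonpos A hg (h.nonneg hN')]
  obtain ⟨a, b, ha, hb, hab⟩ := h
  exact ⟨a * max 1 (g * ρ), b * max 1 (g * ρ), by positivity, by positivity, fun x =>
    ⟨mul_le_relax A hbar hN'.1 hg ha.le (fun y => (hab y).1) x,
      relax_le_mul A hbar hN'.1 hg hb.le (fun y => (hab y).2) x⟩⟩

theorem ecc_relax_le [Nontrivial (Fin m → ℝ)] (h : IsComparable N N')
    (hN' : IsNorm N') (g : ℝ) : ecc (relax A g N) N' ≤ ecc N N' := by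
  rcases le_total g 0 with hg | hg
  · rw [relax_of_nonpos A hg (h.nonneg hN')]
  have hmin := h.eMinus_pos hN'
  have hmax := ePlus_nonneg (h.nonneg hN') hN'.1
  obtain ⟨_, _, -, -, hab⟩ := h
  have hlo : ∀ x, eMinus N N' * N' x ≤ N x := eMinus_mul_le hN' fun x => (hab x).1
  have hhi : ∀ x, N x ≤ ePlus N N' * N' x := le_ePlus_mul hN' fun x => (hab x).2
  set M := max 1 (g * ρ)
  have hM : 0 < M := lt_max_of_lt_left one_pos
  calc ecc (relax A g N) N' ≤ ePlus N N' * M / (eMinus N N' * M) :=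
        ecc_le_div hN' (by positivity) (by positivity) fun x =>
          ⟨mul_le_relax A hbar hN'.1 hg hmin.le hlo x, relax_le_mul A hbar hN'.1 hg hmax hhi x⟩
    _ = ecc N N' := mul_div_mul_right _ _ hM.ne'

end Relaxation

theorem stmt4_general {m r : ℕ}
    (A : Fin r → Matrix (Fin m) (Fin m) ℝ)
    (γ : ℝ → ℝ → ℝ)
    (N0 : (Fin m → ℝ) → ℝ) (hN0 : IsNorm N0)
    (e : Fin m → ℝ) (he : N0 e = 1)
    (Nstar : (Fin m → ℝ) → ℝ) (hNs : IsNorm Nstar)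
    (hbar : ∀ x, jsr A * Nstar x = maxA A Nstar x) :
    (∀ n : ℕ, ecc (iterNnorm A γ N0 e n) Nstar = ecc (iterN A γ N0 n) Nstar) ∧
      Antitone fun n => ecc (iterN A γ N0 n) Nstar := by
  have he0 : e ≠ 0 := by
    rintro rfl
    simp [hN0.map_zero] at he
  have : Nontrivial (Fin m → ℝ) := ⟨⟨e, 0, he0⟩⟩
  have hcomp : ∀ n, IsComparable (iterN A γ N0 n) Nstar := by
    intro n
    induction n with
    | zero => exact hN0.isComparable hNs
    | succ n ih => exact isComparable_relax A hbar ih hNs _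
  exact ⟨fun n => ecc_div_const ((hcomp n).pos hNs he0),
    antitone_nat_of_succ_le fun n => ecc_relax_le A hbar (hcomp n) hNs _⟩

/-- `ecc(‖·‖°_n, ‖·‖*) = ecc(‖·‖_n, ‖·‖*)` for every `n`, and the sequence
`ecc(‖·‖_n, ‖·‖*)` is nonincreasing, for any Barabanov norm `‖·‖*` of `𝒜`. -/
theorem stmt4 {m r : ℕ} (hm : 2 ≤ m) (hr : 1 ≤ r)
    (A : Fin r → Matrix (Fin m) (Fin m) ℝ) (hA : IsIrreducibleFamily A)
    (γ : ℝ → ℝ → ℝ) (hγ : IsAveraging γ)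
    (N0 : (Fin m → ℝ) → ℝ) (hN0 : IsNorm N0)
    (e : Fin m → ℝ) (he : N0 e = 1)
    (Nstar : (Fin m → ℝ) → ℝ) (hNs : IsNorm Nstar)
    (hbar : ∀ x, jsr A * Nstar x = maxA A Nstar x) :
    (∀ n : ℕ, ecc (iterNnorm A γ N0 e n) Nstar = ecc (iterN A γ N0 n) Nstar) ∧
      Antitone fun n => ecc (iterN A γ N0 n) Nstar :=
  stmt4_general A γ N0 hN0 e he Nstar hNs hbar
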